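/- arXiv:0907.3492 — 6 statements merged into one kernel-verified Lean document; each statement's English description precedes it below -/
import Mathlib

section
/- For every integer d ≥ 1, the binomial determinant D_{d,d} = det( C(d−1+j, 2k) )_{0 ≤ j,k ≤ d−1} with row indices d−1, d, …, 2d−2 and column indices 0, 2, …, 2(d−1) equals 2^{(d−1)(d−2)/2}. -/
/-! Let `n = d - 1` and `h m := contract 2 ((X + 1) ^ m)`, the even part of `(X + 1) ^ m` in the
variable `X ^ 2`; row `j` of the matrix lists the coefficients of `contract 2 ((X + 1) ^ (n + j))`.
Combining rows with the unitriangular coefficient matrix of `(X - 2) ^ a`, i.e. rewriting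
`(X - 1) ^ a` in powers of `X + 1`, turns row `a` into the coefficients of
`contract 2 ((X - 1) ^ a * (X + 1) ^ n) = (X - 1) ^ a * h (n - a)`, since `(X - 1) * (X + 1)` is
even. In powers of `X - 1` (again a unitriangular change of basis) these rows form an upper
triangular matrix with diagonal entries `(h (n - a)).eval 1`, and `(h m).eval 1 = 2 ^ (m - 1)`
for `m ≥ 1`, being half of `(1 + 1) ^ m + (1 - 1) ^ m`. -/

open Polynomial Matrix Finset

namespace Polynomial

variable {R : Type*} [CommRing R]

theorem natDegree_contract_le {p : ℕ} (hp : p ≠ 0) (f : R[X]) :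
    (contract p f).natDegree ≤ f.natDegree := by
  refine natDegree_le_iff_coeff_eq_zero.mpr fun N hN => ?_
  rw [coeff_contract hp]
  exact coeff_eq_zero_of_natDegree_lt
    (hN.trans_le (Nat.le_mul_of_pos_right N (Nat.pos_of_ne_zero hp)))

theorem C_two_mul_expand_contract_two (f : R[X]) :
    C 2 * expand R 2 (contract 2 f) = f + f.comp (-X) := by
  ext n
  rw [← neg_one_mul (X : R[X]), ← C_1, ← C_neg, coeff_C_mul, coeff_add, comp_C_mul_X_coeff,
    coeff_expand two_pos]
  rcases Nat.even_or_odd n with hn | hn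
  · rw [if_pos hn.two_dvd, coeff_contract two_ne_zero, Nat.div_mul_cancel hn.two_dvd,
      hn.neg_one_pow]
    ring
  · rw [if_neg (Nat.not_even_iff_odd.mpr hn ∘ even_iff_two_dvd.mpr), hn.neg_one_pow]
    ring

theorem two_mul_eval_one_contract_two (f : R[X]) :
    2 * (contract 2 f).eval 1 = f.eval 1 + f.eval (-1) := by
  simpa using congrArg (eval 1) (C_two_mul_expand_contract_two f)

theorem contract_two_X_sub_one_pow_mul (a b : ℕ) :
    contract 2 ((X - 1 : R[X]) ^ a * (X + 1) ^ (a + b)) =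
      (X - 1) ^ a * contract 2 ((X + 1) ^ b) := by
  have h : (X - 1 : R[X]) ^ a * (X + 1) ^ (a + b) = (X + 1) ^ b * expand R 2 ((X - 1) ^ a) := by
    rw [map_pow, map_sub, expand_X, map_one, pow_add, ← mul_assoc, ← mul_pow]; ring
  rw [h, contract_mul_expand two_ne_zero, mul_comm]

variable {m : ℕ}

theorem sum_coeff_mul_coeff_pow_mul {p : R[X]} (hp : p.natDegree < m) (q f : R[X]) (k : ℕ) :
    ∑ j : Fin m, p.coeff j * (q ^ (j : ℕ) * f).coeff k = (p.comp q * f).coeff k := by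
  rw [comp, eval₂_eq_sum_range' C hp, sum_mul, finsetSum_coeff,
    ← Fin.sum_univ_eq_sum_range (fun j => (C (p.coeff j) * q ^ j * f).coeff k)]
  simp only [mul_assoc, coeff_C_mul]

theorem of_coeff_mul_of_coeff_pow_mul {p : Fin m → R[X]} (hp : ∀ i, (p i).natDegree < m)
    (q f : R[X]) (c : Fin m → ℕ) :
    (of fun i j : Fin m => (p i).coeff j) *
        (of fun j k : Fin m => (q ^ (j : ℕ) * f).coeff (c k)) =
      of fun i k => ((p i).comp q * f).coeff (c k) := by
  ext i k
  exact sum_coeff_mul_coeff_pow_mul (hp i) q f (c k)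

theorem det_of_coeff_X_sub_C_pow (r : R) :
    (of fun i j : Fin m => ((X - C r) ^ (i : ℕ)).coeff j).det = 1 := by
  simp only [show (X - C r : R[X]) = X + C (-r) by rw [C_neg, sub_eq_add_neg]]
  rw [det_of_isLowerTriangular]
  · simp only [of_apply, coeff_X_add_C_pow, Nat.sub_self, pow_zero, Nat.choose_self,
      Nat.cast_one, mul_one, prod_const_one]
  · intro i j hij
    rw [of_apply, coeff_X_add_C_pow,
      Nat.choose_eq_zero_of_lt (Fin.lt_def.mp (OrderDual.toDual_lt_toDual.mp hij)),
      Nat.cast_zero, mul_zero]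

theorem det_of_coeff_X_pow_mul (r : Fin m → R[X]) :
    (of fun i j : Fin m => (X ^ (i : ℕ) * r i).coeff j).det = ∏ i, (r i).coeff 0 := by
  rw [det_of_isUpperTriangular]
  · simp [coeff_X_pow_mul']
  · intro i j hij
    rw [of_apply, coeff_X_pow_mul', if_neg (not_le.mpr (Fin.lt_def.mp (show j < i from hij)))]

end Polynomial

theorem eval_one_contract_two_X_add_one_pow_succ (m : ℕ) :
    (contract 2 ((X + 1 : ℤ[X]) ^ (m + 1))).eval 1 = 2 ^ m := by
  have h := two_mul_eval_one_contract_two ((X + 1 : ℤ[X]) ^ (m + 1))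
  norm_num at h
  exact mul_left_cancel₀ two_ne_zero (h.trans (pow_succ' 2 m))

theorem prod_eval_one_contract_two_X_add_one_pow (n : ℕ) :
    ∏ m ∈ range (n + 1), (contract 2 ((X + 1 : ℤ[X]) ^ m)).eval 1 =
      2 ^ (n * (n - 1) / 2) := by
  rw [prod_range_succ', pow_zero, ← C_1, contract_C, eval_C, mul_one, ← sum_range_id,
    ← prod_pow_eq_pow_sum]
  exact prod_congr rfl fun m _ => eval_one_contract_two_X_add_one_pow_succ m

theorem det_choose_two_mul_eq_det_X_sub_one_pow_mul_contract (n : ℕ) :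
    (of fun j k : Fin (n + 1) => ((n + j).choose (2 * k) : ℤ)).det =
      (of fun a k : Fin (n + 1) =>
        ((X - 1) ^ (a : ℕ) * contract 2 ((X + 1 : ℤ[X]) ^ (n - a))).coeff k).det := by
  have hdeg (a : Fin (n + 1)) : ((X - C 2 : ℤ[X]) ^ (a : ℕ)).natDegree < n + 1 :=
    (natDegree_pow_le_of_le _ (natDegree_X_sub_C_le 2)).trans_lt (by simpa using a.isLt)
  have hprod := of_coeff_mul_of_coeff_pow_mul hdeg (X + 1) ((X + 1) ^ n) (fun k => 2 * k)
  have hM : (of fun j k : Fin (n + 1) =>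
      ((X + 1 : ℤ[X]) ^ (j : ℕ) * (X + 1) ^ n).coeff (2 * k)) =
      of fun j k : Fin (n + 1) => ((n + j).choose (2 * k) : ℤ) := by
    ext j k
    rw [of_apply, of_apply, ← pow_add, coeff_X_add_one_pow, add_comm]
  have hE : (of fun a k : Fin (n + 1) =>
      (((X - C 2 : ℤ[X]) ^ (a : ℕ)).comp (X + 1) * (X + 1) ^ n).coeff (2 * k)) =
      of fun a k => ((X - 1) ^ (a : ℕ) * contract 2 ((X + 1 : ℤ[X]) ^ (n - a))).coeff k := by
    ext a k
    have hn : (X + 1 : ℤ[X]) ^ n = (X + 1) ^ ((a : ℕ) + (n - a)) := by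
      rw [Nat.add_sub_cancel' (Nat.lt_succ_iff.mp a.isLt)]
    have hshift : ((X - C 2 : ℤ[X]).comp (X + 1)) = X - 1 := by
      rw [sub_comp, X_comp, C_comp, map_ofNat]; ring
    rw [of_apply, of_apply, pow_comp, hshift, hn, mul_comm 2 (k : ℕ),
      ← coeff_contract two_ne_zero, contract_two_X_sub_one_pow_mul]
  rw [← hM, ← hE, ← hprod, det_mul, det_of_coeff_X_sub_C_pow, one_mul]

theorem det_X_sub_one_pow_mul_contract (n : ℕ) :
    (of fun a k : Fin (n + 1) =>
        ((X - 1) ^ (a : ℕ) * contract 2 ((X + 1 : ℤ[X]) ^ (n - a))).coeff k).det =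
      ∏ m ∈ range (n + 1), (contract 2 ((X + 1 : ℤ[X]) ^ m)).eval 1 := by
  set h := fun a : Fin (n + 1) => contract 2 ((X + 1 : ℤ[X]) ^ (n - a))
  have hdeg (a : Fin (n + 1)) : (X ^ (a : ℕ) * (h a).comp (X + 1)).natDegree < n + 1 := by
    have hX : (X + 1 : ℤ[X]).natDegree = 1 := by simpa using natDegree_X_add_C (1 : ℤ)
    have hh : (h a).natDegree ≤ n - a :=
      (natDegree_contract_le two_ne_zero _).trans
        ((natDegree_pow_le_of_le _ hX.le).trans (by simp))
    calc (X ^ (a : ℕ) * (h a).comp (X + 1)).natDegree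
        ≤ a + (h a).natDegree * 1 := by
          refine natDegree_mul_le.trans (add_le_add (natDegree_X_pow_le _) ?_)
          exact natDegree_comp_le.trans (by rw [hX])
      _ < n + 1 := by have := a.isLt; omega
  have hprod := of_coeff_mul_of_coeff_pow_mul hdeg (X - C 1) 1 (fun k => k)
  simp only [mul_one] at hprod
  have hE : (of fun a k : Fin (n + 1) =>
      ((X ^ (a : ℕ) * (h a).comp (X + 1)).comp (X - C 1)).coeff k) =
      of fun a k => ((X - 1) ^ (a : ℕ) * h a).coeff k := by
    ext a k
    have hshift : (X + 1 : ℤ[X]).comp (X - C 1) = X := by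
      rw [add_comp, X_comp, one_comp, C_1]; ring
    rw [of_apply, of_apply, mul_comp, X_pow_comp, comp_assoc, hshift, comp_X, C_1]
  rw [← hE, ← hprod, det_mul, det_of_coeff_X_pow_mul, det_of_coeff_X_sub_C_pow, mul_one,
    ← prod_range_reflect, ← Fin.prod_univ_eq_prod_range]
  refine Fintype.prod_congr _ _ fun a => ?_
  rw [coeff_zero_eq_eval_zero, eval_comp]
  simp [h]

/-- Theorem: for every `d ≥ 1`, the binomial determinant `D_{d,d}` with row indices
`d−1, d, …, 2d−2` and column indices `0, 2, …, 2(d−1)` equals `2^{(d−1)(d−2)/2}`. -/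
theorem binomDet_d_eval (d : ℕ) (hd : 1 ≤ d) :
    Matrix.det (Matrix.of fun j k : Fin d =>
        ((d - 1 + (j : ℕ)).choose (2 * (k : ℕ)) : ℤ)) = 2 ^ ((d - 1) * (d - 2) / 2) := by
  obtain ⟨n, rfl⟩ : ∃ n, d = n + 1 := ⟨d - 1, by omega⟩
  rw [Nat.add_sub_cancel, show n + 1 - 2 = n - 1 by omega,
    det_choose_two_mul_eq_det_X_sub_one_pow_mul_contract, det_X_sub_one_pow_mul_contract,
    prod_eval_one_contract_two_X_add_one_pow]
end

section
/- For all integers d ≥ 1 and 0 ≤ i ≤ d, one has D_{d,i} = 2^{d(d−1)/2 − i} · ( C(d,i) + C(d−1,i−1) ), with the convention that C(d−1,−1) = 0 when i = 0. -/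
/-! With `d = e + 1`, the rows `(C(e + a, 2k))_{k ≤ e}` for `a = 0, …, e + 1` form an
`(e + 2) × (e + 1)` matrix whose minor omitting row `i` is `D_{d,i}`. By Laplace expansion the
signed minors `(-1)^i D_{d,i}` are a left kernel vector of this matrix, and so is
`v_i = (-1)^i 2^{d-i} (C(d,i) + C(d-1,i-1))`, because `∑ v_i (X+1)^{e+i} = -2X(1-X²)^e` has no
even coefficients. As soon as one minor is nonzero the left kernel is a line, so the two vectors
are proportional. Omitting the last row leaves the matrix of `D_{d-1,0}` bordered by a column that
vanishes except for a final `1`, so `D_{d,d} = D_{d-1,0}`; induction on `d` then gives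
`D_{d,0} = 2^{C(d,2)}` and the formula. -/

/-- The binomial determinant `D_{d,i}`: the `d × d` determinant whose `(j,k)` entry
(for `0 ≤ j, k ≤ d−1`) is `C(a_j, 2k)`, where `a_j = d−1+j` if `j < i` and
`a_j = d+j` if `j ≥ i`; i.e. rows indexed by `d−1, d, …, 2d−1` with `d−1+i` omitted,
columns by `0, 2, …, 2(d−1)`. -/
def binomDet (d i : ℕ) : ℤ :=
  Matrix.det (Matrix.of fun j k : Fin d =>
    ((if (j : ℕ) < i then d - 1 + (j : ℕ) else d + (j : ℕ)).choose (2 * (k : ℕ)) : ℤ))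

namespace Matrix

variable {R K : Type*} {n : ℕ}

def alternatingMinors [CommRing R] (M : Matrix (Fin (n + 1)) (Fin n) R) (i : Fin (n + 1)) : R :=
  (-1) ^ (i : ℕ) * (M.submatrix i.succAbove id).det

theorem vecMul_alternatingMinors_eq_zero [CommRing R] (M : Matrix (Fin (n + 1)) (Fin n) R) :
    M.alternatingMinors ᵥ* M = 0 := by
  funext k
  -- `B` is `M` with its `k`-th column repeated last: its determinant vanishes, and its Laplace
  -- expansion along the last column is the `k`-th entry of the product, up to sign.
  let B : Matrix (Fin (n + 1)) (Fin (n + 1)) R := of fun a => Fin.snoc (M a) (M a k)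
  have hB : B.det = 0 :=
    det_zero_of_column_eq (Fin.castSucc_lt_last k).ne fun a => by simp [B]
  rw [det_succ_column B (Fin.last n)] at hB
  have hsign : (-1 : R) ^ n * (-1) ^ n = 1 := by rw [← mul_pow]; simp
  calc (M.alternatingMinors ᵥ* M) k
      = (-1) ^ n * ∑ a : Fin (n + 1), (-1) ^ ((a : ℕ) + n) * B a (Fin.last n) *
          (B.submatrix a.succAbove (Fin.last n).succAbove).det := by
        simp only [vecMul, dotProduct, alternatingMinors, Finset.mul_sum]
        refine Finset.sum_congr rfl fun a _ => ?_
        have : B.submatrix a.succAbove (Fin.last n).succAbove = M.submatrix a.succAbove id := by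
          ext; simp [B]
        rw [this]
        simp only [B, of_apply, Fin.snoc_last, pow_add]
        linear_combination -(-1 : R) ^ (a : ℕ) * (M.submatrix a.succAbove id).det * M a k * hsign
    _ = 0 := by rw [Fin.val_last] at hB; rw [hB, mul_zero]

theorem alternatingMinors_mul_eq_of_vecMul_eq_zero [Field K]
    {M : Matrix (Fin (n + 1)) (Fin n) K} {v : Fin (n + 1) → K} (hv : v ᵥ* M = 0)
    {p : Fin (n + 1)} (hp : M.alternatingMinors p ≠ 0) (i : Fin (n + 1)) :
    M.alternatingMinors p * v i = v p * M.alternatingMinors i := by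
  set z := M.alternatingMinors p • v - v p • M.alternatingMinors
  have hz : z ᵥ* M = 0 := by
    rw [sub_vecMul, smul_vecMul, smul_vecMul, hv, vecMul_alternatingMinors_eq_zero]; simp
  have hzp : z p = 0 := by simp [z, mul_comm]
  have hminor : (M.submatrix p.succAbove id).det ≠ 0 := by
    intro h; apply hp; simp [alternatingMinors, h]
  have hrest : (z ∘ p.succAbove) ᵥ* M.submatrix p.succAbove id = 0 := by
    funext k
    have := congrFun hz k
    simp only [vecMul, dotProduct, Fin.sum_univ_succAbove _ p, hzp, zero_mul, zero_add] at this
    simpa [vecMul, dotProduct] using this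
  have hz0 : z = 0 := by
    funext j
    induction j using Fin.succAboveCases p with
    | x => exact hzp
    | p j => exact congrFun (eq_zero_of_vecMul_eq_zero hminor hrest) j
  have := congrFun hz0 i
  simp only [z, Pi.sub_apply, Pi.smul_apply, smul_eq_mul, Pi.zero_apply] at this
  exact sub_eq_zero.mp this

end Matrix

theorem Fin.val_succAbove {n : ℕ} (p : Fin (n + 1)) (j : Fin n) :
    (p.succAbove j : ℕ) = if (j : ℕ) < p then (j : ℕ) else j + 1 := by
  split_ifs with h
  · rw [Fin.succAbove_of_castSucc_lt _ _ h, Fin.val_castSucc]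
  · rw [Fin.succAbove_of_le_castSucc _ _ (not_lt.mp h), Fin.val_succ]

open Matrix Polynomial Finset

def binomRows (e : ℕ) : Matrix (Fin (e + 2)) (Fin (e + 1)) ℚ :=
  of fun a k => ((e + a).choose (2 * k) : ℚ)

theorem binomDet_eq_det_submatrix_binomRows (e : ℕ) (i : Fin (e + 2)) :
    (binomDet (e + 1) i : ℚ) = ((binomRows e).submatrix i.succAbove id).det := by
  rw [binomDet, Int.cast_det]
  congr 1
  ext j k
  simp only [map_apply, of_apply, submatrix_apply, binomRows, id, Fin.val_succAbove,
    Int.cast_natCast]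
  congr 2
  split_ifs <;> omega

theorem binomDet_succ_self (e : ℕ) : binomDet (e + 1) (e + 1) = binomDet e 0 := by
  have hrows : (of fun j k : Fin (e + 1) =>
      ((if (j : ℕ) < e + 1 then e + 1 - 1 + (j : ℕ) else e + 1 + j).choose (2 * (k : ℕ)) :
        ℤ)) =
      of fun j k : Fin (e + 1) => ((e + j).choose (2 * k) : ℤ) := by
    ext j k; rw [of_apply, of_apply, if_pos j.isLt, Nat.add_sub_cancel]
  rw [binomDet, hrows, det_succ_column _ (Fin.last e), Finset.sum_eq_single (Fin.last e)]
  · simp [binomDet, submatrix, ← two_mul]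
  · intro a _ ha
    have : (a : ℕ) < e := Fin.val_lt_last ha
    simp [Nat.choose_eq_zero_of_lt (show e + (a : ℕ) < 2 * e by omega)]
  · simp

theorem Polynomial.coeff_X_mul_expand_two_mul {R : Type*} [CommSemiring R] (f : R[X]) (k : ℕ) :
    (X * expand R 2 f).coeff (2 * k) = 0 := by
  cases k with
  | zero => simp
  | succ k =>
    rw [show 2 * (k + 1) = 2 * k + 1 + 1 by ring, coeff_X_mul, coeff_expand two_pos,
      if_neg (by omega)]

def binomWeight (d i : ℕ) : ℚ :=
  (d.choose i : ℚ) + if i = 0 then 0 else ((d - 1).choose (i - 1) : ℚ)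

def binomKernel (e a : ℕ) : ℚ := (-1) ^ a * 2 ^ (e + 1 - a) * binomWeight (e + 1) a

theorem sum_binomKernel_smul_X_add_one_pow (e : ℕ) :
    ∑ a ∈ range (e + 2), binomKernel e a • (X + 1 : ℚ[X]) ^ (e + a) =
      (-2 : ℚ) • (X * expand ℚ 2 ((1 - X) ^ e)) := by
  have hfirst : ∑ a ∈ range (e + 2), ((-1) ^ a * 2 ^ (e + 1 - a) * (e + 1).choose a : ℚ) •
      (X + 1 : ℚ[X]) ^ (e + a) = (X + 1) ^ e * (1 - X) ^ (e + 1) := by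
    rw [show (1 - X : ℚ[X]) = -(X + 1) + 2 by ring, add_pow (-(X + 1)) 2, mul_sum]
    refine sum_congr rfl fun a _ => ?_
    simp only [smul_eq_C_mul, map_mul, map_pow, map_neg, map_one, map_natCast, map_ofNat]
    rw [neg_pow (X + 1 : ℚ[X])]
    ring
  have hsecond : ∑ a ∈ range (e + 2),
      ((-1) ^ a * 2 ^ (e + 1 - a) * if a = 0 then 0 else (e.choose (a - 1) : ℚ)) •
      (X + 1 : ℚ[X]) ^ (e + a) = -((X + 1) ^ (e + 1) * (1 - X) ^ e) := by
    rw [sum_range_succ', if_pos rfl, mul_zero, zero_smul, add_zero,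
      show (1 - X : ℚ[X]) = -(X + 1) + 2 by ring, add_pow (-(X + 1)) 2, mul_sum,
      ← sum_neg_distrib]
    refine sum_congr rfl fun a _ => ?_
    simp only [if_neg a.succ_ne_zero, Nat.add_sub_cancel, smul_eq_C_mul, map_mul, map_pow,
      map_neg, map_one, map_natCast, map_ofNat, show e + 1 - (a + 1) = e - a by omega]
    rw [neg_pow (X + 1 : ℚ[X])]
    ring
  simp only [binomKernel, binomWeight, Nat.add_sub_cancel, mul_add, add_smul, sum_add_distrib]
  rw [hfirst, hsecond]
  simp only [map_pow, map_sub, map_one, expand_X, smul_eq_C_mul, map_neg, map_ofNat]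
  rw [show (1 - X ^ 2 : ℚ[X]) = (1 - X) * (X + 1) by ring, mul_pow]
  ring

theorem vecMul_binomKernel_binomRows (e : ℕ) :
    (fun a : Fin (e + 2) => binomKernel e a) ᵥ* binomRows e = 0 := by
  funext k
  have h := congrArg (coeff · (2 * k)) (sum_binomKernel_smul_X_add_one_pow e)
  simp only [finsetSum_coeff, coeff_smul, coeff_X_add_one_pow, smul_eq_mul,
    coeff_X_mul_expand_two_mul, mul_zero] at h
  simpa [vecMul, dotProduct, binomRows, Fin.sum_univ_eq_sum_range
    (fun a => binomKernel e a * ((e + a).choose (2 * k) : ℚ))] using h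

theorem two_pow_mul_binomDet_succ (e i : ℕ) (hi : i ≤ e + 1) (h0 : (binomDet e 0 : ℚ) ≠ 0) :
    2 ^ i * (binomDet (e + 1) i : ℚ) = 2 ^ e * binomDet e 0 * binomWeight (e + 1) i := by
  have hlast :
      (binomRows e).alternatingMinors (Fin.last (e + 1)) = (-1) ^ (e + 1) * binomDet e 0 := by
    rw [alternatingMinors, ← binomDet_eq_det_submatrix_binomRows, Fin.val_last,
      binomDet_succ_self]
  have key := alternatingMinors_mul_eq_of_vecMul_eq_zero (vecMul_binomKernel_binomRows e)
    (p := Fin.last (e + 1)) (by simp [hlast, h0]) ⟨i, by omega⟩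
  rw [hlast, alternatingMinors, ← binomDet_eq_det_submatrix_binomRows] at key
  have hweight : binomWeight (e + 1) (e + 1) = 2 := by norm_num [binomWeight]
  simp only [binomKernel, Fin.val_last, Nat.sub_self, pow_zero, hweight] at key
  have hcancel : binomDet e 0 * 2 ^ (e + 1 - i) * binomWeight (e + 1) i =
      2 * (binomDet (e + 1) i : ℚ) :=
    mul_left_cancel₀ (by simp : ((-1 : ℚ) ^ (e + 1) * (-1) ^ i) ≠ 0)
      (by linear_combination key)
  have hpow : (2 : ℚ) ^ (e + 1 - i) * 2 ^ i = 2 * 2 ^ e := by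
    rw [← pow_add, Nat.sub_add_cancel hi, pow_succ']
  refine mul_left_cancel₀ (two_ne_zero : (2 : ℚ) ≠ 0) ?_
  linear_combination (-2 ^ i : ℚ) * hcancel + (binomDet e 0 * binomWeight (e + 1) i) * hpow

theorem binomDet_zero_right (e : ℕ) : (binomDet e 0 : ℚ) = 2 ^ e.choose 2 := by
  induction e with
  | zero => simp [binomDet]
  | succ e ih =>
    have h := two_pow_mul_binomDet_succ e 0 (by omega) (by rw [ih]; positivity)
    simp only [pow_zero, one_mul, binomWeight, Nat.choose_zero_right, if_pos, ih] at h
    rw [h, Nat.choose_succ_succ, Nat.choose_one_right, pow_add]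
    norm_num

/-- Theorem: for all `d ≥ 1` and `0 ≤ i ≤ d`,
`D_{d,i} = 2^{d(d−1)/2 − i} · (C(d,i) + C(d−1,i−1))`, with the convention that
`C(d−1,−1) = 0` when `i = 0`. The power of `2` is interpreted in `ℚ` since the
exponent may be negative. -/
theorem binomDet_normalized_formula (d i : ℕ) (hd : 1 ≤ d) (hi : i ≤ d) :
    (binomDet d i : ℚ) =
      (2 : ℚ) ^ (((d * (d - 1) / 2 : ℕ) : ℤ) - (i : ℤ)) *
        ((d.choose i : ℚ) + if i = 0 then 0 else ((d - 1).choose (i - 1) : ℚ)) := by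
  obtain ⟨e, rfl⟩ : ∃ e, d = e + 1 := ⟨d - 1, by omega⟩
  have h := two_pow_mul_binomDet_succ e i hi (by rw [binomDet_zero_right]; positivity)
  rw [binomDet_zero_right, ← pow_add,
    show e + e.choose 2 = (e + 1).choose 2 by rw [Nat.choose_succ_succ, Nat.choose_one_right]] at h
  rw [← Nat.choose_two_right, zpow_sub₀ two_ne_zero, zpow_natCast, zpow_natCast,
    div_mul_eq_mul_div, eq_div_iff (by positivity)]
  simp only [binomWeight] at h
  linear_combination h
end

section
/- Let d ≥ 1 and let 0 ≤ a_1 < a_2 < … < a_d and 1 ≤ b_1 < b_2 < … < b_d be integers. Then (b_1 b_2 ⋯ b_d) · det( C(a_i, b_j) )_{1 ≤ i,j ≤ d} = (a_1 a_2 ⋯ a_d) · det( C(a_i − 1, b_j − 1) )_{1 ≤ i,j ≤ d}, where in the case a_1 = 0 the entries C(a_1 − 1, b_j − 1) = C(−1, b_j − 1) are taken to be 0. -/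
theorem Nat.mul_choose_eq_mul_choose_pred (n : ℕ) {k : ℕ} (hk : 1 ≤ k) :
    k * n.choose k = n * (n - 1).choose (k - 1) := by
  obtain ⟨k, rfl⟩ := Nat.exists_eq_add_of_le' hk
  cases n with
  | zero => simp
  | succ n => rw [Nat.add_sub_cancel, Nat.add_sub_cancel, Nat.add_one_mul_choose_eq, mul_comm]

theorem mul_choose_eq_mul_ite_choose_pred (n : ℕ) {k : ℕ} (hk : 1 ≤ k) :
    (k : ℤ) * n.choose k = n * if n = 0 then 0 else ((n - 1).choose (k - 1) : ℤ) := by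
  split_ifs with hn
  · simp [hn, Nat.choose_eq_zero_of_lt hk]
  · exact_mod_cast Nat.mul_choose_eq_mul_choose_pred n hk

theorem binomDet_shift_general (d : ℕ) (a b : Fin d → ℕ)
    (hb1 : ∀ j, 1 ≤ b j) :
    (∏ j, (b j : ℤ)) *
        Matrix.det (Matrix.of fun i j : Fin d => ((a i).choose (b j) : ℤ)) =
      (∏ i, (a i : ℤ)) *
        Matrix.det (Matrix.of fun i j : Fin d =>
          if a i = 0 then 0 else ((a i - 1).choose (b j - 1) : ℤ)) := by
  rw [← Matrix.det_mul_row (fun j => (b j : ℤ)), ← Matrix.det_mul_column (fun i => (a i : ℤ))]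
  congr 1
  ext i j
  exact mul_choose_eq_mul_ite_choose_pred (a i) (hb1 j)

/-- Lemma (Gessel–Viennot): let `d ≥ 1`, `0 ≤ a_1 < … < a_d` and `1 ≤ b_1 < … < b_d`.
Then `(b_1 ⋯ b_d) · det(C(a_i, b_j)) = (a_1 ⋯ a_d) · det(C(a_i − 1, b_j − 1))`,
where in case `a_i = 0` the entries `C(a_i − 1, b_j − 1) = C(−1, b_j − 1)` are
taken to be `0`. -/
theorem binomDet_shift (d : ℕ) (hd : 1 ≤ d) (a b : Fin d → ℕ)
    (ha : StrictMono a) (hb : StrictMono b) (hb1 : ∀ j, 1 ≤ b j) :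
    (∏ j, (b j : ℤ)) *
        Matrix.det (Matrix.of fun i j : Fin d => ((a i).choose (b j) : ℤ)) =
      (∏ i, (a i : ℤ)) *
        Matrix.det (Matrix.of fun i j : Fin d =>
          if a i = 0 then 0 else ((a i - 1).choose (b j - 1) : ℤ)) :=
  binomDet_shift_general d a b hb1
end

section
/- Let d ≥ 2, let x ≥ 0 be an integer, and let 0 = b_1 < b_2 < … < b_d be integers. Then the d×d binomial determinant with consecutive row indices x, x+1, …, x+d−1 and column indices b_1, …, b_d satisfies det( C(x+i−1, b_j) )_{1 ≤ i,j ≤ d} = det( C(x+i−1, b_{j+1} − 1) )_{1 ≤ i,j ≤ d−1}. -/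
/-!
Subtracting from each row of `(C(x+i, b_j))` the row above it turns, by Pascal's rule, row `i+1`
into `(C(x+i, b_j - 1))_j` for `b_j ≥ 1` and `0` in the column `b_1 = 0`. Since the top row starts
with `C(x, 0) = 1`, expanding along the first column leaves the `(d-1) × (d-1)` determinant.
-/

namespace Matrix

variable {R : Type*} [CommRing R]

theorem det_of_consecutive_rows_eq_det_of_forward_diff {e : ℕ} (f : ℕ → Fin (e + 1) → R)
    (x : ℕ) :
    det (of fun i j : Fin (e + 1) => f (x + i) j) =
      det (of (Fin.cons (f x) fun (i : Fin e) j => f (x + i + 1) j - f (x + i) j)) :=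
  det_eq_of_forall_row_eq_smul_add_pred (fun _ => 1) (fun _ => rfl) fun i j => by
    simp [add_assoc]

theorem det_succ_eq_of_col_zero_eq_zero {n : ℕ} (A : Matrix (Fin (n + 1)) (Fin (n + 1)) R)
    (hA : ∀ i : Fin n, A i.succ 0 = 0) :
    det A = A 0 0 * det (A.submatrix Fin.succ Fin.succ) := by
  simp [det_succ_column_zero A, Fin.sum_univ_succ, hA]

end Matrix

theorem Nat.cast_choose_succ_sub_choose {R : Type*} [CommRing R] (n : ℕ) {k : ℕ} (hk : k ≠ 0) :
    ((n + 1).choose k : R) - n.choose k = n.choose (k - 1) := by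
  obtain ⟨k, rfl⟩ := Nat.exists_eq_succ_of_ne_zero hk
  simp [Nat.choose_succ_succ']

/-- Lemma (Gessel–Viennot): let `d ≥ 2`, `x ≥ 0`, and `0 = b_1 < b_2 < … < b_d`.
Then the `d × d` binomial determinant with consecutive row indices `x, x+1, …, x+d−1`
and column indices `b_1, …, b_d` satisfies
`det(C(x+i−1, b_j))_{1≤i,j≤d} = det(C(x+i−1, b_{j+1} − 1))_{1≤i,j≤d−1}`. -/
theorem binomDet_consecutive_reduction (d : ℕ) (hd : 2 ≤ d) (x : ℕ)
    (b : Fin d → ℕ) (hb : StrictMono b) (hb0 : b ⟨0, by omega⟩ = 0) :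
    Matrix.det (Matrix.of fun i j : Fin d => ((x + (i : ℕ)).choose (b j) : ℤ)) =
      Matrix.det (Matrix.of fun i j : Fin (d - 1) =>
        ((x + (i : ℕ)).choose (b ⟨(j : ℕ) + 1, by omega⟩ - 1) : ℤ)) := by
  obtain ⟨e, rfl⟩ : ∃ e, d = e + 1 := ⟨d - 1, by omega⟩
  replace hb0 : b 0 = 0 := hb0
  have hb_succ (j : Fin e) : b j.succ ≠ 0 := (hb0 ▸ hb (Fin.succ_pos j)).ne'
  rw [Matrix.det_of_consecutive_rows_eq_det_of_forward_diff (fun m j => (m.choose (b j) : ℤ)),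
    Matrix.det_succ_eq_of_col_zero_eq_zero _ (by simp [hb0])]
  simp only [Fin.cons_zero, hb0, Nat.choose_zero_right, Nat.cast_one, one_mul, Matrix.of_apply]
  congr 1
  ext i j
  exact Nat.cast_choose_succ_sub_choose _ (hb_succ j)
end

section
/- Let F be a field of prime characteristic p and let A_1, …, A_d be nonempty finite subsets of F with |A_i| = k_i. Suppose that (i) 0 ≤ ∑_{i=1}^d (k_i − 1) − d(d−1) < p, (ii) 2d < p, and (iii) the integer binomial determinant det( C(k_j − 1, 2(k−1)) )_{1 ≤ j,k ≤ d} (rows k_1 − 1, …, k_d − 1, columns 0, 2, …, 2(d−1)) is not divisible by p. Then the set C = { a_1 + a_2 + ⋯ + a_d : a_i ∈ A_i and a_i ≠ a_j, a_i ≠ −a_j for all i ≠ j } has cardinality |C| ≥ ∑_{i=1}^d (k_i − 1) − d(d−1) + 1. -/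
/-!
If `C` had at most `m` elements, choose a monic `q` of degree `m` vanishing on `C`.
Then `V · q(x₁ + ⋯ + x_d)`, where `V = det (x_i ^ (2j)) = ∏_{i<j} (x_j² - x_i²)`, vanishes
on `A₁ × ⋯ × A_d`, so by the Combinatorial Nullstellensatz its coefficient of `∏ x_i ^ (k_i - 1)`
is zero. That coefficient only sees the top-degree part `V · (x₁ + ⋯ + x_d) ^ m`, and expanding
the determinant shows that `∏ (k_i - 1)!` times it equals `m! ∏_j (2j)! · det (C(k_i - 1, 2j))`,
which is nonzero in characteristic `p` under the hypotheses.
-/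

open Finset MvPolynomial
open scoped Nat

theorem Polynomial.exists_monic_natDegree_eq_forall_eval_eq_zero {R : Type*} [CommRing R]
    [Nontrivial R] (C : Finset R) {M : ℕ} (hC : #C ≤ M) :
    ∃ q : Polynomial R, q.Monic ∧ q.natDegree = M ∧ ∀ c ∈ C, q.eval c = 0 := by
  have hprod : (∏ c ∈ C, (X - Polynomial.C c)).Monic :=
    monic_prod_of_monic _ _ fun c _ => monic_X_sub_C c
  refine ⟨X ^ (M - #C) * ∏ c ∈ C, (X - Polynomial.C c), (monic_X_pow _).mul hprod, ?_, ?_⟩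
  · rw [(monic_X_pow _).natDegree_mul hprod, natDegree_X_pow,
      natDegree_finsetProd_X_sub_C_eq_card]
    omega
  · intro c hc
    rw [eval_mul, eval_prod, prod_eq_zero hc (by simp), mul_zero]

theorem CharP.natCast_factorial_ne_zero (F : Type*) [Field F] {p : ℕ} [CharP F p]
    (hp : p.Prime) {n : ℕ} (hn : n < p) : (n ! : F) ≠ 0 := by
  rw [Ne, CharP.cast_eq_zero_iff F p, hp.dvd_factorial]
  omega

theorem Fin.sum_two_mul_val (d : ℕ) : ∑ j : Fin d, (2 * j : ℤ) = d * (d - 1) := by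
  induction d with
  | zero => simp
  | succ d ih =>
    rw [Fin.sum_univ_castSucc]
    simp only [Fin.val_castSucc, Fin.val_last, ih]
    push_cast
    ring

namespace MvPolynomial

section Aeval

variable {σ R : Type*} [CommRing R]

theorem totalDegree_aeval_le (s : MvPolynomial σ R) (q : Polynomial R) :
    (Polynomial.aeval s q).totalDegree ≤ q.natDegree * s.totalDegree := by
  rw [Polynomial.aeval_eq_sum_range]
  refine (totalDegree_finsetSum _ _).trans (Finset.sup_le fun k hk => ?_)
  calc (q.coeff k • s ^ k).totalDegree ≤ k * s.totalDegree :=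
        (totalDegree_smul_le _ _).trans (totalDegree_pow _ _)
    _ ≤ q.natDegree * s.totalDegree :=
        Nat.mul_le_mul_right _ (Nat.lt_succ_iff.mp (mem_range.mp hk))

theorem coeff_mul_aeval_of_monic (g s : MvPolynomial σ R) (hs : s.totalDegree ≤ 1)
    {q : Polynomial R} (hq : q.Monic) (t : σ →₀ ℕ)
    (ht : g.totalDegree + q.natDegree ≤ t.degree) :
    coeff t (g * Polynomial.aeval s q) = coeff t (g * s ^ q.natDegree) := by
  rw [Polynomial.aeval_eq_sum_range, sum_range_succ, hq.coeff_natDegree, one_smul, mul_add,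
    coeff_add, mul_sum, coeff_sum, sum_eq_zero, zero_add]
  intro k hk
  apply coeff_eq_zero_of_totalDegree_lt
  rw [← Finsupp.degree_apply]
  calc (g * (q.coeff k • s ^ k)).totalDegree ≤ g.totalDegree + k * s.totalDegree :=
        (totalDegree_mul _ _).trans
          (Nat.add_le_add_left ((totalDegree_smul_le _ _).trans (totalDegree_pow _ _)) _)
    _ ≤ g.totalDegree + k := Nat.add_le_add_left (by simpa using Nat.mul_le_mul_left k hs) _
    _ < t.degree := by have := mem_range.mp hk; omega

end Aeval

section GeneralizedVandermonde

variable {σ R : Type*} [CommRing R] [Fintype σ]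

theorem prod_factorial_mul_coeff_monomial_mul_sum_X_pow (t e : σ →₀ ℕ) (a : R) (M : ℕ)
    (ht : t.degree = M + e.degree) :
    (∏ i, ((t i)! : R)) * coeff t (monomial e a * (∑ i, X i) ^ M) =
      a * (M ! * ∏ i, ((e i)! * (t i).choose (e i)) : ℕ) := by
  rw [coeff_monomial_mul']
  split_ifs with hle
  · have hsub : ∑ i, (t - e) i = M := by
      rw [Finsupp.degree_eq_sum, Finsupp.degree_eq_sum] at ht
      have := sum_add_distrib (s := univ) (f := fun i => (t - e) i) (g := e)
      simp only [Finsupp.tsub_apply, Nat.sub_add_cancel (hle _)] at this ⊢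
      omega
    rw [coeff_sum_X_pow_of_fintype, Finsupp.sum_fintype _ _ (fun _ => rfl), if_pos hsub,
      Finsupp.multinomial_eq_of_support_subset (subset_univ _)]
    have key : (∏ i, (t i)!) * Nat.multinomial univ (t - e) =
        M ! * ∏ i, ((e i)! * (t i).choose (e i)) := by
      rw [← hsub, ← Nat.multinomial_spec, mul_right_comm, ← prod_mul_distrib]
      congr 1
      refine prod_congr rfl fun i _ => ?_
      rw [Finsupp.tsub_apply, ← Nat.choose_mul_factorial_mul_factorial (hle i)]
      ring
    rw [mul_left_comm, ← key]
    push_cast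
    ring
  · obtain ⟨i, hi⟩ : ∃ i, t i < e i := by
      simpa [Finsupp.le_def] using hle
    rw [mul_zero, prod_eq_zero (mem_univ i) (by rw [Nat.choose_eq_zero_of_lt hi, mul_zero]),
      mul_zero, Nat.cast_zero, mul_zero]

variable [DecidableEq σ]

theorem det_of_X_pow (c : σ → ℕ) :
    (Matrix.of fun i j => (X i : MvPolynomial σ R) ^ c j).det =
      ∑ π : Equiv.Perm σ,
        monomial (Finsupp.equivFunOnFinite.symm (c ∘ π)) ((Equiv.Perm.sign π : ℤ) : R) := by
  rw [← Matrix.det_transpose, Matrix.det_apply']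
  refine sum_congr rfl fun π _ => ?_
  rw [monomial_eq, Finsupp.prod_fintype _ _ (fun _ => pow_zero _)]
  simp

theorem isHomogeneous_det_of_X_pow (c : σ → ℕ) :
    (Matrix.of fun i j => (X i : MvPolynomial σ R) ^ c j).det.IsHomogeneous (∑ j, c j) := by
  rw [det_of_X_pow]
  refine IsHomogeneous.sum _ _ _ fun π _ => isHomogeneous_monomial _ ?_
  rw [Finsupp.degree_eq_sum]
  exact Equiv.sum_comp π c

theorem prod_factorial_mul_coeff_det_of_X_pow_mul_sum_X_pow (c : σ → ℕ) (t : σ →₀ ℕ) (M : ℕ)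
    (ht : t.degree = M + ∑ j, c j) :
    (∏ i, ((t i)! : R)) *
        coeff t ((Matrix.of fun i j => (X i : MvPolynomial σ R) ^ c j).det * (∑ i, X i) ^ M) =
      (M ! * ∏ j, (c j)! : ℕ) * (Matrix.of fun i j => ((t i).choose (c j) : R)).det := by
  rw [det_of_X_pow, sum_mul, coeff_sum, mul_sum, ← Matrix.det_transpose, Matrix.det_apply',
    mul_sum]
  refine sum_congr rfl fun π _ => ?_
  rw [prod_factorial_mul_coeff_monomial_mul_sum_X_pow]
  · simp only [Finsupp.coe_equivFunOnFinite_symm, Function.comp_apply, prod_mul_distrib,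
      Matrix.transpose_apply, Matrix.of_apply]
    rw [Equiv.prod_comp π (fun j => (c j)!)]
    push_cast
    ring
  · rw [Finsupp.degree_eq_sum (Finsupp.equivFunOnFinite.symm _)]
    simp only [Finsupp.coe_equivFunOnFinite_symm, Function.comp_apply]
    rw [Equiv.sum_comp π c, ht]

theorem eval_det_of_X_pow_eq_zero (c : σ → ℕ) (x : σ → R) {i i' : σ} (hii' : i ≠ i')
    (hx : ∀ j, x i ^ c j = x i' ^ c j) :
    eval x (Matrix.of fun i j => (X i : MvPolynomial σ R) ^ c j).det = 0 := by
  rw [RingHom.map_det]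
  exact Matrix.det_zero_of_row_eq hii' (by ext j; simpa using hx j)

theorem coeff_det_of_X_pow_mul_sum_X_pow_ne_zero {F : Type*} [Field F] {p : ℕ} [CharP F p]
    (hp : p.Prime) (c : σ → ℕ) (t : σ →₀ ℕ) (M : ℕ) (ht : t.degree = M + ∑ j, c j)
    (hM : M < p) (hc : ∀ j, c j < p)
    (hdet : ¬ (p : ℤ) ∣ (Matrix.of fun i j => ((t i).choose (c j) : ℤ)).det) :
    coeff t ((Matrix.of fun i j => (X i : MvPolynomial σ F) ^ c j).det * (∑ i, X i) ^ M) ≠ 0 := by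
  intro h0
  have key := prod_factorial_mul_coeff_det_of_X_pow_mul_sum_X_pow (R := F) c t M ht
  rw [h0, mul_zero, eq_comm] at key
  refine mul_ne_zero ?_ ?_ key
  · push_cast
    exact mul_ne_zero (CharP.natCast_factorial_ne_zero F hp hM)
      (prod_ne_zero_iff.mpr fun j _ => CharP.natCast_factorial_ne_zero F hp (hc j))
  · have hcast : (Matrix.of fun i j => ((t i).choose (c j) : F)) =
        (Int.castRingHom F).mapMatrix (Matrix.of fun i j => ((t i).choose (c j) : ℤ)) := by
      ext; simp
    rwa [hcast, ← RingHom.map_det, eq_intCast, Ne, CharP.intCast_eq_zero_iff F p]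

end GeneralizedVandermonde

section RestrictedSumset

variable {σ F : Type*} [Fintype σ] [DecidableEq σ] [Field F] [DecidableEq F]

noncomputable def restrictedSumset (A : σ → Finset F) (h : MvPolynomial σ F) : Finset F :=
  ((Fintype.piFinset A).filter fun a => eval a h ≠ 0).image fun a => ∑ i, a i

/-- The Alon–Nathanson–Ruzsa polynomial method. -/
theorem lt_card_restrictedSumset (A : σ → Finset F) (h : MvPolynomial σ F) (t : σ →₀ ℕ)
    (htA : ∀ i, t i < #(A i)) (M : ℕ) (hdeg : h.totalDegree + M ≤ t.degree)
    (hcoeff : coeff t (h * (∑ i, X i) ^ M) ≠ 0) :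
    M < #(restrictedSumset A h) := by
  by_contra! hC
  obtain ⟨q, hq_monic, hq_deg, hq_root⟩ :=
    Polynomial.exists_monic_natDegree_eq_forall_eval_eq_zero _ hC
  set S : MvPolynomial σ F := ∑ i, X i
  have hS : S.totalDegree ≤ 1 :=
    (IsHomogeneous.sum _ _ _ fun i _ => isHomogeneous_X F i).totalDegree_le
  set f := h * Polynomial.aeval S q
  have hf_coeff : coeff t f ≠ 0 := by
    rwa [coeff_mul_aeval_of_monic h S hS hq_monic t (by omega), hq_deg]
  have hf_deg : f.totalDegree = t.degree := by
    refine le_antisymm ?_ (le_totalDegree (mem_support_iff.mpr hf_coeff))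
    calc f.totalDegree ≤ h.totalDegree + (Polynomial.aeval S q).totalDegree :=
          totalDegree_mul _ _
      _ ≤ h.totalDegree + q.natDegree * 1 :=
          Nat.add_le_add_left ((totalDegree_aeval_le S q).trans (Nat.mul_le_mul_left _ hS)) _
      _ ≤ t.degree := by omega
  obtain ⟨a, ha, hfa⟩ := combinatorial_nullstellensatz_exists_eval_nonzero f t hf_coeff hf_deg A htA
  have hq_eval : eval a (Polynomial.aeval S q) = q.eval (∑ i, a i) := by
    simpa [S] using (Polynomial.aeval_algHom_apply (MvPolynomial.aeval a) S q).symm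
  rw [map_mul, hq_eval] at hfa
  have hmem : ∑ i, a i ∈ restrictedSumset A h :=
    mem_image_of_mem _ (mem_filter.mpr ⟨Fintype.mem_piFinset.mpr ha, left_ne_zero_of_mul hfa⟩)
  exact right_ne_zero_of_mul hfa (hq_root _ hmem)

theorem restrictedSumset_det_of_X_pow_two_mul_subset (A : σ → Finset F) (c : σ → ℕ) :
    restrictedSumset A (Matrix.of fun i j => (X i : MvPolynomial σ F) ^ (2 * c j)).det ⊆
      ((Fintype.piFinset A).filter fun a => ∀ i j, i ≠ j → a i ≠ a j ∧ a i ≠ -a j).image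
        fun a => ∑ i, a i := by
  refine image_subset_image fun a ha => ?_
  obtain ⟨ha, hVa⟩ := mem_filter.mp ha
  refine mem_filter.mpr ⟨ha, fun i j hij => ?_⟩
  by_contra hpm
  have hsq : a i ^ 2 = a j ^ 2 := sq_eq_sq_iff_eq_or_eq_neg.mpr (by tauto)
  exact hVa (eval_det_of_X_pow_eq_zero _ a hij fun k => by rw [pow_mul, pow_mul, hsq])

end RestrictedSumset

end MvPolynomial

theorem polynomial_method_sumset_bound_general (F : Type*) [Field F] [DecidableEq F]
    (p : ℕ) (hp : p.Prime) [CharP F p] (d : ℕ)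
    (A : Fin d → Finset F) (hne : ∀ i, (A i).Nonempty)
    (m : ℤ) (hm : m = (∑ i, ((A i).card - 1 : ℤ)) - d * (d - 1))
    (hm0 : 0 ≤ m) (hmp : m < p) (h2d : 2 * d < p)
    (hdet : ¬ (p : ℤ) ∣ Matrix.det (Matrix.of fun j k : Fin d =>
      (((A j).card - 1).choose (2 * (k : ℕ)) : ℤ))) :
    m + 1 ≤ ((Fintype.piFinset A).filter
        (fun a : Fin d → F => ∀ i j, i ≠ j → a i ≠ a j ∧ a i ≠ -a j)
      |>.image (fun a => ∑ i, a i)).card := by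
  lift m to ℕ using hm0
  set t : Fin d →₀ ℕ := Finsupp.equivFunOnFinite.symm fun i => #(A i) - 1
  have ht : t.degree = m + ∑ j : Fin d, 2 * (j : ℕ) := by
    rw [Finsupp.degree_eq_sum]
    have : ∑ i, (t i : ℤ) = m + ∑ j : Fin d, (2 * j : ℤ) := by
      simp only [t, Finsupp.coe_equivFunOnFinite_symm, Nat.cast_pred (hne _).card_pos,
        Fin.sum_two_mul_val]
      omega
    exact_mod_cast this
  set V := (Matrix.of fun i j : Fin d => (X i : MvPolynomial (Fin d) F) ^ (2 * (j : ℕ))).det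
  have hV : V.totalDegree ≤ ∑ j : Fin d, 2 * (j : ℕ) :=
    (isHomogeneous_det_of_X_pow _).totalDegree_le
  have hlt : m < #(restrictedSumset A V) :=
    lt_card_restrictedSumset A V t (fun i => Nat.sub_lt (hne i).card_pos one_pos) m (by omega)
      (coeff_det_of_X_pow_mul_sum_X_pow_ne_zero hp _ t m ht (by omega) (fun j => by omega) hdet)
  have hsub := restrictedSumset_det_of_X_pow_two_mul_subset A fun j : Fin d => (j : ℕ)
  calc (m : ℤ) + 1 ≤ #(restrictedSumset A V) := by exact_mod_cast hlt
    _ ≤ _ := by exact_mod_cast card_le_card hsub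

/-- Lemma (polynomial method, key counting lemma): let `F` be a field of prime
characteristic `p` and `A_1, …, A_d` nonempty finite subsets of `F` with `|A_i| = k_i`.
If (i) `0 ≤ ∑ (k_i − 1) − d(d−1) < p`, (ii) `2d < p`, and (iii) the binomial
determinant `det(C(k_j − 1, 2(k−1)))_{1≤j,k≤d}` is not divisible by `p`, then
`C = { a_1 + ⋯ + a_d : a_i ∈ A_i, a_i ≠ ±a_j for i ≠ j }` has cardinality
`|C| ≥ ∑ (k_i − 1) − d(d−1) + 1`. -/
theorem polynomial_method_sumset_bound (F : Type*) [Field F] [DecidableEq F]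
    (p : ℕ) (hp : p.Prime) [CharP F p] (d : ℕ) (hd : 1 ≤ d)
    (A : Fin d → Finset F) (hne : ∀ i, (A i).Nonempty)
    (m : ℤ) (hm : m = (∑ i, ((A i).card - 1 : ℤ)) - d * (d - 1))
    (hm0 : 0 ≤ m) (hmp : m < p) (h2d : 2 * d < p)
    (hdet : ¬ (p : ℤ) ∣ Matrix.det (Matrix.of fun j k : Fin d =>
      (((A j).card - 1).choose (2 * (k : ℕ)) : ℤ))) :
    m + 1 ≤ ((Fintype.piFinset A).filter
        (fun a : Fin d → F => ∀ i j, i ≠ j → a i ≠ a j ∧ a i ≠ -a j)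
      |>.image (fun a => ∑ i, a i)).card :=
  polynomial_method_sumset_bound_general F p hp d A hne m hm hm0 hmp h2d hdet
end

section
/- Let p be an odd prime number and let S be a zero-sum free finite sequence (multiset) of elements of ℤ/pℤ with exactly p−1 terms. Then some element g ∈ ℤ/pℤ has multiplicity at least p−1 in S; that is, all terms of S are equal. -/
/-!
If `S` is zero-sum free then so is every subsequence `T`, and each new term `a` enlarges the set
of subsums, since otherwise `a + Σ(T) = Σ(T) ∋ 0` would put `-a` in `Σ(T)`; hence
`|Σ(T)| ≥ |T| + 1`. If `S = a b T` had two distinct terms `a ≠ b`, the three distinct elements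
`-a`, `-b`, `-(a + b)` would lie outside `Σ(T)`, so `|G| ≥ |T| + 4 = |S| + 2`, which is
impossible for `|S| = p - 1` in `ℤ/pℤ`.
-/

open scoped Finset

namespace Multiset

variable {G : Type*}

def subsums [AddCommMonoid G] [DecidableEq G] (S : Multiset G) : Finset G :=
  (S.powerset.map sum).toFinset

def ZeroSumFree [AddCommMonoid G] (S : Multiset G) : Prop :=
  ∀ T ≤ S, T ≠ 0 → T.sum ≠ 0

section AddCommMonoid

variable [AddCommMonoid G]

theorem ZeroSumFree.mono {S T : Multiset G} (hS : S.ZeroSumFree) (hTS : T ≤ S) :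
    T.ZeroSumFree :=
  fun U hUT => hS U (hUT.trans hTS)

variable [DecidableEq G]

theorem mem_subsums {S : Multiset G} {x : G} : x ∈ S.subsums ↔ ∃ T ≤ S, T.sum = x := by
  simp [subsums]

theorem zero_mem_subsums (S : Multiset G) : 0 ∈ S.subsums :=
  mem_subsums.2 ⟨0, zero_le _, sum_zero⟩

theorem subsums_cons (a : G) (S : Multiset G) :
    (a ::ₘ S).subsums = S.subsums ∪ S.subsums.image (a + ·) := by
  simp only [subsums, powerset_cons, map_add, toFinset_add, map_map, toFinset_map,
    Finset.image_image]
  congr 1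
  exact Finset.image_congr fun T _ => sum_cons a T

end AddCommMonoid

variable [AddCommGroup G] [DecidableEq G]

theorem ZeroSumFree.neg_sum_notMem_subsums {U T : Multiset G} (hUT : (U + T).ZeroSumFree)
    (hU : U ≠ 0) : -U.sum ∉ T.subsums := by
  rw [mem_subsums]
  rintro ⟨V, hVT, hV⟩
  exact hUT (U + V) (add_le_add_right hVT U) (by simp [hU]) (by simp [hV])

theorem card_subsums_lt_card_subsums_cons {a : G} {S : Multiset G} (ha : -a ∉ S.subsums) :
    #S.subsums < #(a ::ₘ S).subsums := by
  rw [subsums_cons]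
  refine Finset.card_lt_card
    (Finset.ssubset_iff_subset_ne.2 ⟨Finset.subset_union_left, fun h => ha ?_⟩)
  have htranslate : S.subsums.image (a + ·) = S.subsums :=
    Finset.eq_of_subset_of_card_le (Finset.subset_union_right.trans h.symm.subset)
      (Finset.card_image_of_injective _ (add_right_injective a)).ge
  obtain ⟨x, hx, hx0⟩ := Finset.mem_image.1 (htranslate ▸ zero_mem_subsums S)
  rwa [neg_eq_of_add_eq_zero_right hx0]

theorem ZeroSumFree.card_add_one_le_card_subsums {S : Multiset G} (hS : S.ZeroSumFree) :
    card S + 1 ≤ #S.subsums := by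
  induction S using Multiset.induction_on with
  | empty => simpa using Finset.card_pos.2 ⟨0, zero_mem_subsums (0 : Multiset G)⟩
  | cons a S ih =>
    have ha : -a ∉ S.subsums := by
      simpa using hS.neg_sum_notMem_subsums (U := {a}) (T := S) (singleton_ne_zero a)
    have := card_subsums_lt_card_subsums_cons ha
    have := ih (hS.mono (le_cons_self S a))
    rw [card_cons]
    omega

theorem ZeroSumFree.card_add_two_le_card_of_ne [Fintype G] {S : Multiset G}
    (hS : S.ZeroSumFree) {a b : G} (ha : a ∈ S) (hb : b ∈ S) (hab : a ≠ b) :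
    card S + 2 ≤ Fintype.card G := by
  obtain ⟨T, rfl⟩ : ∃ T, S = {a, b} + T := by
    obtain ⟨S', rfl⟩ := exists_cons_of_mem ha
    obtain ⟨T, rfl⟩ := exists_cons_of_mem ((mem_cons.1 hb).resolve_left hab.symm)
    exact ⟨T, by simp⟩
  have hnotMem : ∀ U ≤ ({a, b} : Multiset G), U ≠ 0 → -U.sum ∉ T.subsums :=
    fun U hU => (hS.mono (add_le_add_left hU T)).neg_sum_notMem_subsums
  have ha0 : a ≠ 0 := fun h => hS {a} (by simp) (singleton_ne_zero a) (by simp [h])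
  have hb0 : b ≠ 0 := fun h => hS {b} (by simp) (singleton_ne_zero b) (by simp [h])
  let missing : Finset G := {-a, -b, -(a + b)}
  have hmissing : #missing = 3 :=
    Finset.card_eq_three.2 ⟨_, _, _, by simpa using hab, by simpa using hb0,
      by simpa using ha0, rfl⟩
  have hdisj : Disjoint missing T.subsums := by
    simp only [missing, Finset.disjoint_left, Finset.mem_insert, Finset.mem_singleton]
    rintro x (rfl | rfl | rfl)
    · simpa using hnotMem {a} (by simp) (singleton_ne_zero a)
    · simpa using hnotMem {b} (by simp) (singleton_ne_zero b)
    · simpa using hnotMem {a, b} le_rfl (by simp)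
  calc card ({a, b} + T) + 2 = #missing + (card T + 1) := by simp [hmissing]; omega
    _ ≤ #missing + #T.subsums := by
      gcongr
      exact (hS.mono le_add_self).card_add_one_le_card_subsums
    _ = #(missing ∪ T.subsums) := (Finset.card_union_of_disjoint hdisj).symm
    _ ≤ Fintype.card G := Finset.card_le_univ _

end Multiset

theorem zero_sum_free_sequence_of_length_p_sub_one_is_constant_general (p : ℕ)
    (S : Multiset (ZMod p)) (hcard : Multiset.card S = p - 1)
    (hzsf : ∀ T : Multiset (ZMod p), T ≤ S → T ≠ 0 → T.sum ≠ 0) :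
    ∃ g : ZMod p, p - 1 ≤ S.count g := by
  by_contra! hcount
  -- `p = 0` (where `ZMod 0 = ℤ`) is excluded because then `p - 1 = 0` in `ℕ`
  have : NeZero p := ⟨fun hp => by simpa [hp] using hcount 0⟩
  obtain ⟨a, ha⟩ := Multiset.card_pos_iff_exists_mem.1 (hcard ▸ (hcount 0).pos)
  obtain ⟨b, hb, hba⟩ : ∃ b ∈ S, b ≠ a := by
    by_contra! hconst
    exact (hcount a).not_ge
      (hcard ▸ (Multiset.count_eq_card.2 fun b hb => (hconst b hb).symm).ge)
  have hbound := Multiset.ZeroSumFree.card_add_two_le_card_of_ne hzsf ha hb hba.symm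
  rw [ZMod.card] at hbound
  omega

/-- Corollary: let `p` be an odd prime and `S` a zero-sum free finite sequence
(multiset) of elements of `ℤ/pℤ` with exactly `p − 1` terms. Then some element
`g ∈ ℤ/pℤ` has multiplicity at least `p − 1` in `S`; that is, all terms of `S`
are equal. -/
theorem zero_sum_free_sequence_of_length_p_sub_one_is_constant (p : ℕ) (hp : p.Prime)
    (hodd : Odd p) (S : Multiset (ZMod p)) (hcard : Multiset.card S = p - 1)
    (hzsf : ∀ T : Multiset (ZMod p), T ≤ S → T ≠ 0 → T.sum ≠ 0) :
    ∃ g : ZMod p, p - 1 ≤ S.count g :=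
  zero_sum_free_sequence_of_length_p_sub_one_is_constant_general p S hcard hzsf
end
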